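/- Let G = (V, E) be a 4-regular finite simple graph and let B ⊆ V be any 4-path vertex cover of G. Let b_e be the number of edges of G with both endpoints in B, and let s_c be the number of connected components of the induced subgraph G[V∖B] that are not triangles (these components are stars). Then |B| = (1/3)|V| + (1/3)b_e + (1/3)s_c, i.e., 3|B| = |V| + b_e + s_c. -/

import Mathlib

open SimpleGraph

/-- `G` contains a path of order `k` (i.e., with `k` vertices). -/
def HasPathOfOrder {V : Type*} (G : SimpleGraph V) (k : ℕ) : Prop :=
  ∃ (u v : V) (w : G.Walk u v), w.IsPath ∧ w.length + 1 = k

/-- `F` is a `k`-path vertex cover of `G`: the subgraph induced on the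
complement of `F` contains no path of order `k`. -/
def IsPathVertexCover {V : Type*} (G : SimpleGraph V) (k : ℕ) (F : Finset V) : Prop :=
  ¬ HasPathOfOrder (G.induce ((↑F : Set V)ᶜ)) k

/-- `psi G k` is the minimum cardinality of a `k`-path vertex cover of `G`. -/
noncomputable def psi {V : Type*} [Fintype V] (G : SimpleGraph V) (k : ℕ) : ℕ :=
  sInf {n | ∃ F : Finset V, IsPathVertexCover G k F ∧ F.card = n}

/-- The connected component `c` of `H` is a triangle: it has exactly three
vertices, which are mutually adjacent. -/
def CompIsTriangle {W : Type*} (H : SimpleGraph W) (c : H.ConnectedComponent) : Prop :=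
  Set.ncard {v | H.connectedComponentMk v = c} = 3 ∧
    ∀ u v, H.connectedComponentMk u = c → H.connectedComponentMk v = c →
      u ≠ v → H.Adj u v

/-! Counting degrees over `B` and over `V ∖ B` and subtracting, 4-regularity gives
`4|B| - 2 b_e = 4|V ∖ B| - 2 e(G[V ∖ B])`: both sides equal the number of edges between `B`
and `V ∖ B`. A connected graph without a 4-path is either a triangle or a tree (a cycle of
length at least four contains a 4-path, and a triangle cannot have a neighbour outside it), so
`e(G[V ∖ B]) = |V ∖ B| - s_c`; eliminating `e(G[V ∖ B])` leaves a linear identity. -/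

open Finset

namespace SimpleGraph

variable {V W : Type*} {G : SimpleGraph V}

section PathOfOrderFour

lemma Walk.IsPath.hasPathOfOrder {u v : V} {p : G.Walk u v} (hp : p.IsPath) {n : ℕ}
    (hn : n ≤ p.length) : HasPathOfOrder G (n + 1) :=
  ⟨u, _, p.take n, hp.take n, by simp [hn]⟩

lemma HasPathOfOrder.map {G' : SimpleGraph W} (f : G ↪g G') {k : ℕ}
    (h : HasPathOfOrder G k) : HasPathOfOrder G' k := by
  obtain ⟨u, v, p, hp, hk⟩ := h
  exact ⟨_, _, p.map f.toHom, hp.map f.injective, by simpa using hk⟩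

lemma hasPathOfOrder_four_of_adj {a b c d : V} (hab : G.Adj a b) (hbc : G.Adj b c)
    (hcd : G.Adj c d) (hac : a ≠ c) (had : a ≠ d) (hbd : b ≠ d) : HasPathOfOrder G 4 := by
  refine ⟨a, d, .cons hab (.cons hbc (.cons hcd .nil)), ?_, rfl⟩
  simp [Walk.isPath_def, hab.ne, hbc.ne, hcd.ne, hac, had, hbd]

lemma Walk.IsCycle.length_eq_three_of_not_hasPathOfOrder (hG : ¬HasPathOfOrder G 4) {u : V}
    {c : G.Walk u u} (hc : c.IsCycle) : c.length = 3 := by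
  cases c with
  | nil => exact (Walk.not_isCycle_nil hc).elim
  | cons h p =>
    have hp := ((Walk.cons_isCycle_iff p h).mp hc).1
    have h3 := hc.three_le_length
    rw [Walk.length_cons] at h3 ⊢
    by_contra hne
    exact hG (hp.hasPathOfOrder (n := 3) (by omega))

lemma hasPathOfOrder_four_of_adj_of_isNClique [DecidableEq V] {s : Finset V}
    (hs : G.IsNClique 3 s) {x y : V} (hxy : G.Adj x y) (hx : x ∉ s) (hy : y ∈ s) :
    HasPathOfOrder G 4 := by
  obtain ⟨a, b, c, hab, hac, hbc, rfl⟩ := is3Clique_iff.mp hs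
  simp only [mem_insert, mem_singleton, not_or] at hx hy
  obtain ⟨hxa, hxb, hxc⟩ := hx
  rcases hy with rfl | rfl | rfl
  · exact hasPathOfOrder_four_of_adj hxy hab hbc hxb hxc hac.ne
  · exact hasPathOfOrder_four_of_adj hxy hab.symm hac hxa hxc hbc.ne
  · exact hasPathOfOrder_four_of_adj hxy hac.symm hab hxa hxb hbc.ne'

lemma Connected.eq_univ_of_isNClique_three [Fintype V] [DecidableEq V] (hconn : G.Connected)
    (hG : ¬HasPathOfOrder G 4) {s : Finset V} (hs : G.IsNClique 3 s) : s = univ := by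
  refine eq_univ_of_forall fun x => by_contra fun hx => ?_
  obtain ⟨y, hy⟩ : s.Nonempty := card_pos.mp (by rw [hs.card_eq]; norm_num)
  obtain ⟨d, -, hd, hd'⟩ :=
    (hconn.preconnected x y).some.exists_boundary_dart (↑s)ᶜ hx (by simpa using hy)
  exact hG (hasPathOfOrder_four_of_adj_of_isNClique hs d.adj hd (by simpa using hd'))

lemma Connected.isAcyclic_or_eq_top [Finite V] (hconn : G.Connected)
    (hG : ¬HasPathOfOrder G 4) : G.IsAcyclic ∨ G = ⊤ ∧ Nat.card V = 3 := by
  classical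
  have := Fintype.ofFinite V
  refine or_iff_not_imp_left.mpr fun hcyc => ?_
  obtain ⟨u, c, hc⟩ : ∃ (u : V) (c : G.Walk u u), c.IsCycle := by
    simpa [IsAcyclic] using hcyc
  obtain ⟨s, hs⟩ := is3Clique_iff_exists_cycle_length_three.mpr
    ⟨u, c, hc, hc.length_eq_three_of_not_hasPathOfOrder hG⟩
  obtain rfl := hconn.eq_univ_of_isNClique_three hG hs
  exact ⟨isClique_univ.mp (by simpa using hs.isClique), by simpa using hs.card_eq⟩

end PathOfOrderFour

section EdgeCount

lemma ncard_edgeSet_induce (s : Set V) :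
    (G.induce s).edgeSet.ncard = {e ∈ G.edgeSet | ∀ v ∈ e, v ∈ s}.ncard := by
  rw [← Set.ncard_image_of_injective _ (Sym2.map.injective Subtype.val_injective)]
  congr 1
  ext e
  induction e using Sym2.ind with | _ x y => ?_
  simp only [Set.mem_image, Sym2.exists, Sym2.map_mk, mem_edgeSet, comap_adj,
    Function.Embedding.subtype_apply, Set.mem_ofPred_eq, Sym2.mem_iff, forall_eq_or_imp,
    forall_eq, Subtype.exists]
  constructor
  · rintro ⟨a, ha, b, hb, hab, he⟩
    rcases Sym2.eq_iff.mp he with ⟨rfl, rfl⟩ | ⟨rfl, rfl⟩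
    exacts [⟨hab, ha, hb⟩, ⟨hab.symm, hb, ha⟩]
  · rintro ⟨h, hx, hy⟩
    exact ⟨x, hx, y, hy, h, rfl⟩

lemma card_edgeSet_top_of_card_eq_three (h : Nat.card V = 3) :
    Nat.card (⊤ : SimpleGraph V).edgeSet = 3 := by
  classical
  have : Finite V := Nat.finite_of_card_ne_zero (by omega)
  have := Fintype.ofFinite V
  rw [Nat.card_eq_fintype_card, card_edgeSet, card_edgeFinset_top_eq_card_choose_two,
    ← Nat.card_eq_fintype_card, h]
  rfl

variable [Fintype V] [DecidableEq V] (G) [DecidableRel G.Adj]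

lemma sum_card_filter_adj_eq_two_mul_card_edgeFinset_induce (s : Finset V) :
    ∑ v ∈ s, #{w ∈ s | G.Adj v w} = 2 * #(G.induce (s : Set V)).edgeFinset := by
  rw [← sum_degrees_eq_twice_card_edges, ← Finset.sum_coe_sort s]
  refine Finset.sum_congr rfl fun v _ => ?_
  have h := congrArg card (G.map_neighborFinset_induce (s := (s : Set V)) v)
  rw [card_map, card_neighborFinset_eq_degree] at h
  convert h.symm using 2
  ext w
  simp [and_comm]

lemma degree_eq_card_filter_adj_add (s : Finset V) (v : V) :
    G.degree v = #{w ∈ s | G.Adj v w} + #{w ∈ sᶜ | G.Adj v w} := by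
  rw [← card_neighborFinset_eq_degree, neighborFinset_eq_filter,
    ← card_filter_add_card_filter_not (· ∈ s), filter_filter, filter_filter]
  congr 2 <;> ext w <;> simp [and_comm]

lemma sum_degree_eq (s : Finset V) :
    ∑ v ∈ s, G.degree v =
      2 * #(G.induce (s : Set V)).edgeFinset + ∑ v ∈ s, #{w ∈ sᶜ | G.Adj v w} := by
  rw [← sum_card_filter_adj_eq_two_mul_card_edgeFinset_induce, ← sum_add_distrib]
  exact sum_congr rfl fun v _ => G.degree_eq_card_filter_adj_add s v

lemma sum_card_filter_adj_compl_comm (s : Finset V) :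
    ∑ v ∈ s, #{w ∈ sᶜ | G.Adj v w} = ∑ v ∈ sᶜ, #{w ∈ s | G.Adj v w} := by
  simpa [bipartiteAbove, bipartiteBelow, G.adj_comm] using
    sum_card_bipartiteAbove_eq_sum_card_bipartiteBelow (s := s) (t := sᶜ) G.Adj

variable {G}

lemma IsRegularOfDegree.mul_card_add_two_mul_card_edgeFinset_induce_compl {d : ℕ}
    (hG : G.IsRegularOfDegree d) (s : Finset V) :
    d * #s + 2 * #(G.induce (s : Set V)ᶜ).edgeFinset =
      d * #sᶜ + 2 * #(G.induce (s : Set V)).edgeFinset := by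
  have hs := G.sum_degree_eq s
  have hsc := G.sum_degree_eq sᶜ
  rw [compl_compl, ← sum_card_filter_adj_compl_comm] at hsc
  have hcoe : #(G.induce (s : Set V)ᶜ).edgeFinset =
      #(G.induce ((sᶜ : Finset V) : Set V)).edgeFinset := by
    congr! 3 <;> simp
  simp only [hG.degree_eq, sum_const, smul_eq_mul] at hs hsc
  linarith

end EdgeCount

section Components

variable {K : SimpleGraph W}

lemma connectedComponentMk_eq_of_mem_edgeSet {e : Sym2 W} (he : e ∈ K.edgeSet) {u v : W}
    (hu : u ∈ e) (hv : v ∈ e) : K.connectedComponentMk u = K.connectedComponentMk v := by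
  induction e using Sym2.ind with | _ x y => ?_
  have hxy : K.connectedComponentMk x = K.connectedComponentMk y :=
    ConnectedComponent.sound (K.mem_edgeSet.mp he).reachable
  rw [Sym2.mem_iff] at hu hv
  rcases hu with rfl | rfl <;> rcases hv with rfl | rfl <;> simp [hxy]

lemma ConnectedComponent.compIsTriangle_iff (c : K.ConnectedComponent) :
    CompIsTriangle K c ↔ c.toSimpleGraph = ⊤ ∧ Nat.card c = 3 := by
  rw [CompIsTriangle, and_comm, eq_top_iff_forall_ne_adj]
  refine and_congr ⟨fun h => ?_, fun h => ?_⟩ Iff.rfl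
  · rintro ⟨u, hu⟩ ⟨v, hv⟩ hne
    exact h u v hu hv fun e => hne (Subtype.ext e)
  · intro u v hu hv hne
    exact h ⟨u, hu⟩ ⟨v, hv⟩ fun e => hne (congrArg Subtype.val e)

lemma ConnectedComponent.isTree_toSimpleGraph [Finite W] (hK : ¬HasPathOfOrder K 4)
    {c : K.ConnectedComponent} (hc : ¬CompIsTriangle K c) : c.toSimpleGraph.IsTree := by
  have hc' : ¬HasPathOfOrder c.toSimpleGraph 4 := fun h => hK (h.map (Embedding.induce _))
  refine ⟨c.connected_toSimpleGraph, ?_⟩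
  refine (c.connected_toSimpleGraph.isAcyclic_or_eq_top hc').resolve_right ?_
  rwa [← c.compIsTriangle_iff]

variable [Fintype W] [DecidableEq W] [DecidableRel K.Adj]

lemma card_eq_sum_card_connectedComponent :
    Nat.card W = ∑ c : K.ConnectedComponent, Nat.card c := by
  rw [← Nat.card_congr (Equiv.sigmaFiberEquiv K.connectedComponentMk), Nat.card_sigma]
  rfl

lemma card_edgeSet_eq_sum_card_edgeSet_toSimpleGraph :
    Nat.card K.edgeSet = ∑ c : K.ConnectedComponent, Nat.card c.toSimpleGraph.edgeSet := by
  let f : K.edgeSet → K.ConnectedComponent := fun e => K.connectedComponentMk e.1.out.1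
  rw [← Nat.card_congr (Equiv.sigmaFiberEquiv f), Nat.card_sigma]
  refine sum_congr rfl fun c _ => ?_
  rw [Nat.card_coe_set_eq, ConnectedComponent.toSimpleGraph, ncard_edgeSet_induce,
    ← Nat.card_coe_set_eq]
  refine Nat.card_congr ((Equiv.subtypeSubtypeEquivSubtypeInter (· ∈ K.edgeSet)
    (fun e => K.connectedComponentMk e.out.1 = c)).trans
    (Equiv.subtypeEquivRight fun e => and_congr_right fun he => ?_))
  refine ⟨fun h v hv => ?_, fun h => h _ e.out_fst_mem⟩
  exact (connectedComponentMk_eq_of_mem_edgeSet he hv e.out_fst_mem).trans h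

theorem card_edgeFinset_add_card_not_compIsTriangle (hK : ¬HasPathOfOrder K 4) :
    #K.edgeFinset + Nat.card {c : K.ConnectedComponent // ¬CompIsTriangle K c} =
      Fintype.card W := by
  classical
  have hE : #K.edgeFinset = Nat.card K.edgeSet := by
    rw [edgeFinset_card, Nat.card_eq_fintype_card]
  have hS : Nat.card {c : K.ConnectedComponent // ¬CompIsTriangle K c} =
      ∑ c, if ¬CompIsTriangle K c then 1 else 0 := by
    rw [Nat.card_eq_fintype_card, Fintype.card_subtype, card_filter]
  rw [hE, hS, ← Nat.card_eq_fintype_card, card_eq_sum_card_connectedComponent (K := K),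
    card_edgeSet_eq_sum_card_edgeSet_toSimpleGraph, ← sum_add_distrib]
  refine sum_congr rfl fun c _ => ?_
  by_cases hc : CompIsTriangle K c
  · obtain ⟨htop, h3⟩ := c.compIsTriangle_iff.mp hc
    rw [if_neg (not_not.mpr hc), htop, card_edgeSet_top_of_card_eq_three h3, h3]
  · rw [if_pos hc, (isTree_iff_connected_and_card.mp (c.isTree_toSimpleGraph hK hc)).2]

end Components

end SimpleGraph

/-- If `G` is `4`-regular and `B` is a `4`-path vertex cover, then
`3|B| = |V| + b_e + s_c`, where `b_e` is the number of edges with both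
endpoints in `B` and `s_c` is the number of (star) components of `G[V ∖ B]`
that are not triangles. -/
theorem stmt_14 {V : Type*} [Fintype V] [DecidableEq V] (G : SimpleGraph V)
    [DecidableRel G.Adj] (hreg : G.IsRegularOfDegree 4)
    (B : Finset V) (hB : IsPathVertexCover G 4 B)
    (be sc : ℕ)
    (hbe : be = Set.ncard {e ∈ G.edgeSet | ∀ v ∈ e, v ∈ B})
    (hsc : sc = Nat.card {c : (G.induce ((↑B : Set V)ᶜ)).ConnectedComponent //
        ¬ CompIsTriangle _ c}) :
    3 * B.card = Fintype.card V + be + sc := by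
  have hbe' : be = #(G.induce (B : Set V)).edgeFinset := by
    rw [hbe, edgeFinset_card, ← Nat.card_eq_fintype_card, Nat.card_coe_set_eq]
    exact (ncard_edgeSet_induce _).symm
  have hdeg := hreg.mul_card_add_two_mul_card_edgeFinset_induce_compl B
  have hcomp := card_edgeFinset_add_card_not_compIsTriangle (K := G.induce (B : Set V)ᶜ) hB
  rw [← hsc, Fintype.card_compl_set] at hcomp
  simp only [coe_sort_coe, Fintype.card_coe] at hcomp
  have hV := card_add_card_compl B
  omega
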